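/- arXiv:2311.11137 — 5 statements merged into one kernel-verified Lean document; each statement's English description precedes it below -/
import Mathlib

section
/- Let x, v, w ∈ M₂(ℝ) satisfy ⟨x,x⟩ = −1, ⟨v,v⟩ = 0, ⟨x,v⟩ = ⟨x,w⟩ = ⟨v,w⟩ = 0, with v ≠ 0 and v, w linearly independent. Then ⟨w,w⟩ > 0. (In particular, for a null curve γ in AdS without inflection points, the acceleration γ'' is a space-like vector.) -/
/-!
Left multiplication by `adj x` scales `⟨·,·⟩` by `det x = -⟨x,x⟩ = 1`, so it is an isometry taking
`x` to `1`; since `⟨1, A⟩ = -tr A / 2`, this reduces the statement to traceless `v, w`. On traceless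
matrices `[[a, b], [c, -a]]` the form is the Lorentzian form `a² + bc`, and for a null `v` orthogonal
to `w` every `2 × 2` minor `m` of the pair `(v, w)` satisfies `m² = u² ⟨w,w⟩` with `u` an entry of
`v` or twice one. So `⟨w,w⟩ ≤ 0` would force all minors to vanish, i.e. `v, w` dependent.
-/

noncomputable section

open Matrix

/-- The space of 2×2 real matrices, i.e. `ℝ^{2,2}`. -/
abbrev M2 : Type := Matrix (Fin 2) (Fin 2) ℝ

/-- The symmetric bilinear form of signature (−,−,+,+) on `M₂(ℝ)`, with `⟨X,X⟩ = -det X`. -/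
def ip (X Y : M2) : ℝ :=
  (1 / 2) * (X 0 1 * Y 1 0 + X 1 0 * Y 0 1 - X 0 0 * Y 1 1 - X 1 1 * Y 0 0)

lemma ip_self (A : M2) : ip A A = -A.det := by
  simp only [ip, det_fin_two]
  ring

lemma ip_mul_mul (M A B : M2) : ip (M * A) (M * B) = M.det * ip A B := by
  simp only [ip, mul_apply, Fin.sum_univ_two, det_fin_two]
  ring

lemma ip_one_left (A : M2) : ip 1 A = -A.trace / 2 := by
  simp only [ip, trace_fin_two, one_apply_eq, one_apply_ne (by decide : (0 : Fin 2) ≠ 1),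
    one_apply_ne (by decide : (1 : Fin 2) ≠ 0)]
  ring

lemma Matrix.not_linearIndependent_pair_of_mul_eq {m n K : Type*} [Field K]
    {v w : Matrix m n K} (h : ∀ i j k l, v i j * w k l = w i j * v k l) :
    ¬LinearIndependent K ![v, w] := by
  intro hli
  obtain ⟨i, j, hij⟩ : ∃ i j, v i j ≠ 0 := by
    by_contra! hzero
    exact hli.ne_zero 0 (Matrix.ext hzero)
  have hrel : w i j • v + (-v i j) • w = 0 := by
    ext k l
    simp only [add_apply, smul_apply, smul_eq_mul, zero_apply]
    linear_combination -h i j k l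
  exact hij (neg_eq_zero.mp (LinearIndependent.pair_iff.mp hli _ _ hrel).2)

lemma linearIndependent_pair_mul_left {x M v w : M2} (hxM : x * M = 1)
    (hind : LinearIndependent ℝ ![v, w]) : LinearIndependent ℝ ![M * v, M * w] := by
  refine LinearIndependent.pair_iff.mpr fun s t hst => LinearIndependent.pair_iff.mp hind s t ?_
  simpa [mul_add, Matrix.mul_smul, ← mul_assoc, hxM] using congr_arg (x * ·) hst

lemma mul_eq_mul_of_trace_eq_zero_of_ip_self_nonpos {v w : M2} (htv : v.trace = 0)
    (htw : w.trace = 0) (hv : ip v v = 0) (hvw : ip v w = 0) (hw : ip w w ≤ 0) :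
    ∀ i j k l, v i j * w k l = w i j * v k l := by
  have hv11 : v 1 1 = -v 0 0 := by rw [trace_fin_two] at htv; linarith
  have hw11 : w 1 1 = -w 0 0 := by rw [trace_fin_two] at htw; linarith
  simp only [ip, hv11, hw11] at hv hvw hw
  set a := v 0 0; set b := v 0 1; set c := v 1 0
  set p := w 0 0; set r := w 0 1; set s := w 1 0
  have e1 : a * a + b * c = 0 := by linarith
  have e2 : 2 * a * p + b * s + c * r = 0 := by linarith
  have hq : p * p + r * s ≤ 0 := by linarith
  have minor_eq_zero (m u : ℝ) (h : m ^ 2 = u ^ 2 * (p * p + r * s)) : m = 0 := by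
    nlinarith [sq_nonneg m, sq_nonneg u]
  have hbc : b * s = c * r := sub_eq_zero.mp <| minor_eq_zero _ (2 * a) <| by
    linear_combination (-(2 * a * p) + b * s + c * r) * e2 - 4 * r * s * e1
  have hab : a * r = b * p := sub_eq_zero.mp <| minor_eq_zero _ b <| by
    linear_combination r ^ 2 * e1 - b * r * e2
  have hac : a * s = c * p := sub_eq_zero.mp <| minor_eq_zero _ c <| by
    linear_combination s ^ 2 * e1 - c * s * e2
  intro i j k l
  fin_cases i <;> fin_cases j <;> fin_cases k <;> fin_cases l <;>
    simp only [Fin.zero_eta, Fin.mk_one, hv11, hw11] <;> linarith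

theorem stmt2_general (x v w : M2) (hx : ip x x = -1) (hv : ip v v = 0)
    (hxv : ip x v = 0) (hxw : ip x w = 0) (hvw : ip v w = 0)
    (hind : LinearIndependent ℝ ![v, w]) :
    0 < ip w w := by
  have hdet : x.det = 1 := by linarith [ip_self x]
  set M := x.adjugate
  have hM : M.det = 1 := by simp [M, det_adjugate, hdet]
  have hxM : x * M = 1 := by rw [mul_adjugate, hdet, one_smul]
  have hMx : M * x = 1 := by rw [adjugate_mul, hdet, one_smul]
  have isometry (A B : M2) : ip (M * A) (M * B) = ip A B := by rw [ip_mul_mul, hM, one_mul]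
  have trace_eq_zero (A : M2) (hA : ip x A = 0) : (M * A).trace = 0 := by
    have := isometry x A
    rw [hMx, hA, ip_one_left] at this
    linarith
  by_contra! hw
  refine Matrix.not_linearIndependent_pair_of_mul_eq ?_ (linearIndependent_pair_mul_left hxM hind)
  exact mul_eq_mul_of_trace_eq_zero_of_ip_self_nonpos (trace_eq_zero v hxv) (trace_eq_zero w hxw)
    (by rw [isometry, hv]) (by rw [isometry, hvw]) (by rwa [isometry])

/-- If `x, v, w ∈ M₂(ℝ)` satisfy `⟨x,x⟩ = -1`, `⟨v,v⟩ = 0`,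
`⟨x,v⟩ = ⟨x,w⟩ = ⟨v,w⟩ = 0`, with `v ≠ 0` and `v, w` linearly independent, then
`⟨w,w⟩ > 0`. (In particular the acceleration of a null curve in AdS without inflection
points is space-like.) -/
theorem stmt2 (x v w : M2) (hx : ip x x = -1) (hv : ip v v = 0)
    (hxv : ip x v = 0) (hxw : ip x w = 0) (hvw : ip v w = 0)
    (hv0 : v ≠ 0) (hind : LinearIndependent ℝ ![v, w]) :
    0 < ip w w :=
  stmt2_general x v w hx hv hxv hxw hvw hind
end
end

section
/- Let γ : J → M₂(ℝ) be a smooth null curve parameterized by proper time with bending κ, and let T := (1/√2)γ', N := (1/2)γ'', B := (1/√2)κγ' − (1/(2√2))γ'''. Then at every s ∈ J the frame {γ, T, N, B} is a Cartan basis: ⟨γ,γ⟩ = −1, ⟨T,T⟩ = 0, ⟨N,N⟩ = 1, ⟨B,B⟩ = 0, ⟨T,B⟩ = 1, and ⟨γ,T⟩ = ⟨γ,N⟩ = ⟨γ,B⟩ = ⟨T,N⟩ = ⟨N,B⟩ = 0. In particular γ(s), T(s), N(s), B(s) are linearly independent. -/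
noncomputable section

open Matrix Set

attribute [local instance] Matrix.normedAddCommGroup Matrix.normedSpace

/-- First derivative. -/
def d1 (γ : ℝ → M2) : ℝ → M2 := deriv γ
/-- Second derivative. -/
def d2 (γ : ℝ → M2) : ℝ → M2 := deriv (deriv γ)
/-- Third derivative. -/
def d3 (γ : ℝ → M2) : ℝ → M2 := deriv (deriv (deriv γ))

/-- The bending `κ(s) = -(1/16)⟨γ'''(s), γ'''(s)⟩` of a null curve parameterized by
proper time. -/
def bending (γ : ℝ → M2) (s : ℝ) : ℝ := -(1 / 16) * ip (d3 γ s) (d3 γ s)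

/-- The tangent vector field `T = (1/√2)γ'`. -/
def Tf (γ : ℝ → M2) (s : ℝ) : M2 := (1 / Real.sqrt 2) • d1 γ s
/-- The normal vector field `N = (1/2)γ''`. -/
def Nf (γ : ℝ → M2) (s : ℝ) : M2 := (1 / 2 : ℝ) • d2 γ s
/-- The binormal vector field `B = (1/√2)κγ' - (1/(2√2))γ'''`. -/
def Bf (γ : ℝ → M2) (s : ℝ) : M2 :=
  (bending γ s / Real.sqrt 2) • d1 γ s - (1 / (2 * Real.sqrt 2)) • d3 γ s

/- ### Auxiliary lemmas -/

lemma ip_symm (X Y : M2) : ip X Y = ip Y X := by unfold ip; ring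

lemma ip_smul_left (a : ℝ) (X Y : M2) : ip (a • X) Y = a * ip X Y := by
  simp [ip, Matrix.smul_apply, smul_eq_mul]; ring

lemma ip_smul_right (a : ℝ) (X Y : M2) : ip X (a • Y) = a * ip X Y := by
  simp [ip, Matrix.smul_apply, smul_eq_mul]; ring

lemma ip_sub_left (X Y Z : M2) : ip (X - Y) Z = ip X Z - ip Y Z := by
  simp [ip, Matrix.sub_apply]; ring

lemma ip_sub_right (X Y Z : M2) : ip X (Y - Z) = ip X Y - ip X Z := by
  simp [ip, Matrix.sub_apply]; ring

lemma ip_lin (a b c d : ℝ) (X Y Z W V : M2) :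
    ip (a • X + b • Y + c • Z + d • W) V
      = a * ip X V + b * ip Y V + c * ip Z V + d * ip W V := by
  simp [ip, Matrix.add_apply, Matrix.smul_apply, smul_eq_mul]; ring

def entryLM (i j : Fin 2) : M2 →ₗ[ℝ] ℝ where
  toFun X := X i j
  map_add' _ _ := rfl
  map_smul' _ _ := rfl

lemma hasDerivAt_entry {f : ℝ → M2} {f' : M2} {s : ℝ}
    (hf : HasDerivAt f f' s) (i j : Fin 2) :
    HasDerivAt (fun t => f t i j) (f' i j) s :=
  ((entryLM i j).toContinuousLinearMap.hasFDerivAt.comp_hasDerivAt s hf)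

lemma hasDerivAt_ip {f g : ℝ → M2} {f' g' : M2} {s : ℝ}
    (hf : HasDerivAt f f' s) (hg : HasDerivAt g g' s) :
    HasDerivAt (fun t => ip (f t) (g t)) (ip f' (g s) + ip (f s) g') s := by
  have H := (((((hasDerivAt_entry hf 0 1).mul (hasDerivAt_entry hg 1 0)).add
      ((hasDerivAt_entry hf 1 0).mul (hasDerivAt_entry hg 0 1))).sub
      ((hasDerivAt_entry hf 0 0).mul (hasDerivAt_entry hg 1 1))).sub
      ((hasDerivAt_entry hf 1 1).mul (hasDerivAt_entry hg 0 0))).const_mul (1/2 : ℝ)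
  convert H using 1
  · rfl
  · rfl
  · funext t; simp [ip]
  simp [ip]; ring

/-- Differentiating a pointwise-constant `ip`-pairing on an open set. -/
lemma ip_deriv_step {J : Set ℝ} (hJopen : IsOpen J) {f g F G : ℝ → M2}
    (hf : ∀ s ∈ J, HasDerivAt f (F s) s) (hg : ∀ s ∈ J, HasDerivAt g (G s) s)
    {c : ℝ} (h : ∀ s ∈ J, ip (f s) (g s) = c) :
    ∀ s ∈ J, ip (F s) (g s) + ip (f s) (G s) = 0 := by
  intro s hs
  have hd := hasDerivAt_ip (hf s hs) (hg s hs)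
  have hev : (fun t => ip (f t) (g t)) =ᶠ[nhds s] fun _ => c :=
    Filter.eventually_of_mem (hJopen.mem_nhds hs) h
  have h0 : HasDerivAt (fun t => ip (f t) (g t)) 0 s :=
    (hasDerivAt_const s c).congr_of_eventuallyEq hev
  exact hd.unique h0

/-- Along a smooth null curve `γ : J → AdS` parameterized by proper time
(`det γ = 1`, `⟨γ',γ'⟩ = 0`, `⟨γ'',γ''⟩ = 4` on the open interval `J`) the frame
`{γ, T, N, B}` is at every point a Cartan basis: `⟨γ,γ⟩ = -1`, `⟨T,T⟩ = 0`, `⟨N,N⟩ = 1`,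
`⟨B,B⟩ = 0`, `⟨T,B⟩ = 1`, and all other pairings vanish; in particular the four vectors
are linearly independent. -/
theorem stmt3 (J : Set ℝ) (hJopen : IsOpen J) (hJint : J.OrdConnected)
    (γ : ℝ → M2) (hγ : ContDiffOn ℝ (⊤ : ℕ∞) γ J)
    (hdet : ∀ s ∈ J, (γ s).det = 1)
    (hnull : ∀ s ∈ J, ip (d1 γ s) (d1 γ s) = 0)
    (hproper : ∀ s ∈ J, ip (d2 γ s) (d2 γ s) = 4) :
    ∀ s ∈ J,
      ip (γ s) (γ s) = -1 ∧
      ip (Tf γ s) (Tf γ s) = 0 ∧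
      ip (Nf γ s) (Nf γ s) = 1 ∧
      ip (Bf γ s) (Bf γ s) = 0 ∧
      ip (Tf γ s) (Bf γ s) = 1 ∧
      ip (γ s) (Tf γ s) = 0 ∧
      ip (γ s) (Nf γ s) = 0 ∧
      ip (γ s) (Bf γ s) = 0 ∧
      ip (Tf γ s) (Nf γ s) = 0 ∧
      ip (Nf γ s) (Bf γ s) = 0 ∧
      LinearIndependent ℝ ![γ s, Tf γ s, Nf γ s, Bf γ s] := by
  -- smoothness of the derivatives
  have hγ1 : ContDiffOn ℝ (⊤ : ℕ∞) (d1 γ) J := hγ.deriv_of_isOpen hJopen (by simp)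
  have hγ2 : ContDiffOn ℝ (⊤ : ℕ∞) (d2 γ) J := hγ1.deriv_of_isOpen hJopen (by simp)
  have h0' : ∀ s ∈ J, HasDerivAt γ (d1 γ s) s := fun s hs =>
    ((hγ.differentiableOn (by simp)).differentiableAt (hJopen.mem_nhds hs)).hasDerivAt
  have h1' : ∀ s ∈ J, HasDerivAt (d1 γ) (d2 γ s) s := fun s hs =>
    ((hγ1.differentiableOn (by simp)).differentiableAt (hJopen.mem_nhds hs)).hasDerivAt
  have h2' : ∀ s ∈ J, HasDerivAt (d2 γ) (d3 γ s) s := fun s hs =>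
    ((hγ2.differentiableOn (by simp)).differentiableAt (hJopen.mem_nhds hs)).hasDerivAt
  -- ⟨γ, γ⟩ = -1 on J
  have e0 : ∀ s ∈ J, ip (γ s) (γ s) = -1 := by
    intro s hs
    have := hdet s hs
    rw [Matrix.det_fin_two] at this
    simp only [ip]
    linarith
  -- ⟨γ, γ'⟩ = 0
  have r1 : ∀ s ∈ J, ip (γ s) (d1 γ s) = 0 := by
    intro s hs
    have := ip_deriv_step hJopen h0' h0' e0 s hs
    rw [ip_symm (d1 γ s)] at this
    linarith
  -- ⟨γ', γ''⟩ = 0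
  have r2 : ∀ s ∈ J, ip (d1 γ s) (d2 γ s) = 0 := by
    intro s hs
    have := ip_deriv_step hJopen h1' h1' hnull s hs
    rw [ip_symm (d2 γ s)] at this
    linarith
  -- ⟨γ, γ''⟩ = 0
  have r3 : ∀ s ∈ J, ip (γ s) (d2 γ s) = 0 := by
    intro s hs
    have := ip_deriv_step hJopen h0' h1' r1 s hs
    have hn := hnull s hs
    linarith
  -- ⟨γ'', γ'''⟩ = 0
  have r4 : ∀ s ∈ J, ip (d2 γ s) (d3 γ s) = 0 := by
    intro s hs
    have := ip_deriv_step hJopen h2' h2' hproper s hs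
    rw [ip_symm (d3 γ s)] at this
    linarith
  -- ⟨γ', γ'''⟩ = -4
  have r5 : ∀ s ∈ J, ip (d1 γ s) (d3 γ s) = -4 := by
    intro s hs
    have := ip_deriv_step hJopen h1' h2' r2 s hs
    have hp := hproper s hs
    rw [ip_symm (d2 γ s) (d2 γ s)] at hp
    linarith [hproper s hs]
  -- ⟨γ, γ'''⟩ = 0
  have r6 : ∀ s ∈ J, ip (γ s) (d3 γ s) = 0 := by
    intro s hs
    have := ip_deriv_step hJopen h0' h2' r3 s hs
    linarith [r2 s hs]
  intro s hs
  have hs2 : Real.sqrt 2 * Real.sqrt 2 = 2 := Real.mul_self_sqrt (by norm_num)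
  have hs2ne : Real.sqrt 2 ≠ 0 := by positivity
  have hκ : ip (d3 γ s) (d3 γ s) = -16 * bending γ s := by
    unfold bending; ring
  -- shorthand values
  have v00 := e0 s hs
  have v01 := r1 s hs
  have v02 := r3 s hs
  have v03 := r6 s hs
  have v11 := hnull s hs
  have v12 := r2 s hs
  have v13 := r5 s hs
  have v22 := hproper s hs
  have v23 := r4 s hs
  have v10 : ip (d1 γ s) (γ s) = 0 := by rw [ip_symm]; exact v01
  have v20 : ip (d2 γ s) (γ s) = 0 := by rw [ip_symm]; exact v02
  have v30 : ip (d3 γ s) (γ s) = 0 := by rw [ip_symm]; exact v03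
  have v21 : ip (d2 γ s) (d1 γ s) = 0 := by rw [ip_symm]; exact v12
  have v31 : ip (d3 γ s) (d1 γ s) = -4 := by rw [ip_symm]; exact v13
  have v32 : ip (d3 γ s) (d2 γ s) = 0 := by rw [ip_symm]; exact v23
  -- the ten pairings
  have pTT : ip (Tf γ s) (Tf γ s) = 0 := by
    simp only [Tf, ip_smul_left, ip_smul_right, v11]; ring
  have pNN : ip (Nf γ s) (Nf γ s) = 1 := by
    simp only [Nf, ip_smul_left, ip_smul_right, v22]; norm_num
  have pBB : ip (Bf γ s) (Bf γ s) = 0 := by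
    simp only [Bf, ip_sub_left, ip_sub_right, ip_smul_left, ip_smul_right,
      v11, v13, v31, hκ]
    field_simp
    ring_nf
  have pTB : ip (Tf γ s) (Bf γ s) = 1 := by
    simp only [Tf, Bf, ip_sub_right, ip_smul_left, ip_smul_right, v11, v13]
    field_simp
    nlinarith [hs2]
  have pGT : ip (γ s) (Tf γ s) = 0 := by
    simp only [Tf, ip_smul_right, v01]; ring
  have pGN : ip (γ s) (Nf γ s) = 0 := by
    simp only [Nf, ip_smul_right, v02]; ring
  have pGB : ip (γ s) (Bf γ s) = 0 := by
    simp only [Bf, ip_sub_right, ip_smul_right, v01, v03]; ring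
  have pTN : ip (Tf γ s) (Nf γ s) = 0 := by
    simp only [Tf, Nf, ip_smul_left, ip_smul_right, v12]; ring
  have pNB : ip (Nf γ s) (Bf γ s) = 0 := by
    simp only [Nf, Bf, ip_sub_right, ip_smul_left, ip_smul_right, v21, v23]; ring
  refine ⟨v00, pTT, pNN, pBB, pTB, pGT, pGN, pGB, pTN, pNB, ?_⟩
  -- linear independence from nondegeneracy of the Gram matrix
  rw [Fintype.linearIndependent_iff]
  intro g hg
  rw [Fin.sum_univ_four] at hg
  simp only [Matrix.cons_val_zero, Matrix.cons_val_one, Matrix.head_cons,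
    Matrix.cons_val_two, Matrix.tail_cons, Matrix.cons_val_three] at hg
  have key : ∀ V : M2, g 0 * ip (γ s) V + g 1 * ip (Tf γ s) V
      + g 2 * ip (Nf γ s) V + g 3 * ip (Bf γ s) V = 0 := by
    intro V
    rw [← ip_lin, hg]
    simp [ip]
  have k0 := key (γ s)
  have k1 := key (Tf γ s)
  have k2 := key (Nf γ s)
  have k3 := key (Bf γ s)
  rw [v00, ip_symm (Tf γ s) (γ s), pGT, ip_symm (Nf γ s) (γ s), pGN,
    ip_symm (Bf γ s) (γ s), pGB] at k0
  rw [pGT, pTT, ip_symm (Nf γ s) (Tf γ s), pTN, ip_symm (Bf γ s) (Tf γ s), pTB] at k1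
  rw [pGN, pTN, pNN, ip_symm (Bf γ s) (Nf γ s), pNB] at k2
  rw [pGB, pTB, pNB, pBB] at k3
  have g0 : g 0 = 0 := by linarith
  have g2 : g 2 = 0 := by linarith
  have g1 : g 1 = 0 := by linarith
  have g3 : g 3 = 0 := by linarith
  intro i
  fin_cases i <;> assumption
end
end

section
/- Fix m ≥ 1, ρ ∈ ℝ, an open interval I ⊆ ℝ, and smooth maps K, P : ℝ × I → M_m(ℝ). Let 𝓕 : ℝ × I → M_m(ℝ) be a smooth map with 𝓕(s,t) invertible for all (s,t), satisfying ∂ₛ𝓕 = 𝓕·K and ∂ₜ𝓕 = 𝓕·P. If P(ρ, t) = P(0, t) for all t ∈ I, then the monodromy M : t ↦ 𝓕(ρ, t)·𝓕(0, t)⁻¹ is constant on I. -/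
noncomputable section

open Matrix Set

attribute [local instance] Matrix.normedAddCommGroup Matrix.normedSpace

namespace Stmt12Aux

variable {m : ℕ}

/-- Matrix multiplication as a continuous bilinear map (w.r.t. the elementwise sup norm). -/
def mulCLM (m : ℕ) :
    Matrix (Fin m) (Fin m) ℝ →L[ℝ] Matrix (Fin m) (Fin m) ℝ →L[ℝ] Matrix (Fin m) (Fin m) ℝ :=
  LinearMap.toContinuousLinearMap <|
    ((LinearMap.toContinuousLinearMap :
        (Matrix (Fin m) (Fin m) ℝ →ₗ[ℝ] Matrix (Fin m) (Fin m) ℝ) ≃ₗ[ℝ]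
        (Matrix (Fin m) (Fin m) ℝ →L[ℝ] Matrix (Fin m) (Fin m) ℝ)).toLinearMap.comp
      (LinearMap.mul ℝ (Matrix (Fin m) (Fin m) ℝ)))

@[simp] theorem mulCLM_apply (A B : Matrix (Fin m) (Fin m) ℝ) : mulCLM m A B = A * B := rfl

theorem HasDerivAt.matMul {f g : ℝ → Matrix (Fin m) (Fin m) ℝ} {f' g' : Matrix (Fin m) (Fin m) ℝ}
    {t : ℝ} (hf : HasDerivAt f f' t) (hg : HasDerivAt g g' t) :
    HasDerivAt (fun t => f t * g t) (f' * g t + f t * g') t := by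
  refine hasDerivAt_pi.mpr fun i => hasDerivAt_pi.mpr fun j => ?_
  simp only [Matrix.mul_apply, Matrix.add_apply, ← Finset.sum_add_distrib]
  exact HasDerivAt.fun_sum fun k _ =>
    (hasDerivAt_pi.mp (hasDerivAt_pi.mp hf i) k).mul (hasDerivAt_pi.mp (hasDerivAt_pi.mp hg k) j)

theorem diff_entry {f : ℝ → Matrix (Fin m) (Fin m) ℝ} {t : ℝ}
    (hf : DifferentiableAt ℝ f t) (i j : Fin m) :
    DifferentiableAt ℝ (fun t => f t i j) t := by
  have h1 : DifferentiableAt ℝ (fun t => f t i) t := (differentiableAt_pi.mp hf) i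
  exact (differentiableAt_pi.mp h1) j

theorem diff_of_entries {f : ℝ → Matrix (Fin m) (Fin m) ℝ} {t : ℝ}
    (hf : ∀ i j, DifferentiableAt ℝ (fun t => f t i j) t) : DifferentiableAt ℝ f t :=
  differentiableAt_pi.mpr fun i => differentiableAt_pi.mpr fun j => hf i j

theorem diff_det {f : ℝ → Matrix (Fin m) (Fin m) ℝ} {t : ℝ}
    (hf : ∀ i j, DifferentiableAt ℝ (fun t => f t i j) t) :
    DifferentiableAt ℝ (fun t => (f t).det) t := by
  simp only [Matrix.det_apply']
  exact DifferentiableAt.fun_sum fun (σ : Equiv.Perm (Fin m)) _ =>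
    DifferentiableAt.const_mul (DifferentiableAt.fun_finsetProd fun i _ => hf (σ i) i) _

theorem diff_inv {f : ℝ → Matrix (Fin m) (Fin m) ℝ} {t : ℝ}
    (hf : DifferentiableAt ℝ f t) (hu : IsUnit (f t)) :
    DifferentiableAt ℝ (fun t => (f t)⁻¹) t := by
  have h1 : (fun t => (f t)⁻¹) = fun t => ((f t).det)⁻¹ • (f t).adjugate := by
    funext x; rw [Matrix.inv_def, Ring.inverse_eq_inv']
  rw [h1]
  have hdet : DifferentiableAt ℝ (fun t => (f t).det) t := diff_det fun i j => diff_entry hf i j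
  have hdetne : (f t).det ≠ 0 := ((Matrix.isUnit_iff_isUnit_det (f t)).mp hu).ne_zero
  have hadj : DifferentiableAt ℝ (fun t => (f t).adjugate) t := by
    refine diff_of_entries fun i j => ?_
    simp only [Matrix.adjugate_apply]
    refine diff_det fun k l => ?_
    simp only [Matrix.updateRow_apply]
    by_cases hk : k = j
    · simp [hk]
    · simpa [hk] using diff_entry hf k l
  exact (hdet.inv hdetne).smul hadj

end Stmt12Aux

open Stmt12Aux

/-- Let `𝓕 : ℝ × I → GL(m,ℝ)` be a smooth solution of the linear system
`∂ₛ𝓕 = 𝓕·K`, `∂ₜ𝓕 = 𝓕·P` with `K, P` smooth on `ℝ × I`. If `P(ρ,t) = P(0,t)` for all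
`t ∈ I`, then the monodromy `M(t) = 𝓕(ρ,t)·𝓕(0,t)⁻¹` is constant on the open interval
`I`. -/
theorem stmt12 (m : ℕ) (hm : 1 ≤ m) (ρ : ℝ)
    (I : Set ℝ) (hIopen : IsOpen I) (hIint : I.OrdConnected)
    (K P F : ℝ → ℝ → Matrix (Fin m) (Fin m) ℝ)
    (hK : ContDiffOn ℝ (⊤ : ℕ∞) (fun p : ℝ × ℝ => K p.1 p.2) (Set.univ ×ˢ I))
    (hP : ContDiffOn ℝ (⊤ : ℕ∞) (fun p : ℝ × ℝ => P p.1 p.2) (Set.univ ×ˢ I))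
    (hF : ContDiffOn ℝ (⊤ : ℕ∞) (fun p : ℝ × ℝ => F p.1 p.2) (Set.univ ×ˢ I))
    (hinv : ∀ (s : ℝ), ∀ t ∈ I, IsUnit (F s t))
    (hs : ∀ (s : ℝ), ∀ t ∈ I, deriv (fun x => F x t) s = F s t * K s t)
    (ht : ∀ (s : ℝ), ∀ t ∈ I, deriv (fun y => F s y) t = F s t * P s t)
    (hper : ∀ t ∈ I, P ρ t = P 0 t) :
    ∀ t ∈ I, ∀ t' ∈ I, F ρ t * (F 0 t)⁻¹ = F ρ t' * (F 0 t')⁻¹ := by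
  have hop : IsOpen ((Set.univ : Set ℝ) ×ˢ I) := isOpen_univ.prod hIopen
  -- derivative in the `t` direction
  have hFt : ∀ s : ℝ, ∀ t ∈ I, HasDerivAt (fun y => F s y) (F s t * P s t) t := by
    intro s t htI
    have h1 : DifferentiableAt ℝ (fun p : ℝ × ℝ => F p.1 p.2) (s, t) :=
      (hF.contDiffAt (hop.mem_nhds ⟨trivial, htI⟩)).differentiableAt (by simp)
    have h2 : DifferentiableAt ℝ (fun y => F s y) t :=
      h1.comp t ((differentiableAt_const s).prodMk differentiableAt_id)
    have h3 : HasDerivAt (fun y => F s y) (deriv (fun y => F s y) t) t := h2.hasDerivAt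
    rwa [ht s t htI] at h3
  set G : ℝ → Matrix (Fin m) (Fin m) ℝ := fun t => (F 0 t)⁻¹ with hGdef
  have hGdiff : ∀ t ∈ I, DifferentiableAt ℝ G t := fun t htI =>
    diff_inv (hFt 0 t htI).differentiableAt (hinv 0 t htI)
  have hGderiv : ∀ t ∈ I, HasDerivAt G (-(P 0 t * G t)) t := by
    intro t htI
    have hGd := (hGdiff t htI).hasDerivAt
    have hprod : HasDerivAt (fun y => G y * F 0 y)
        (deriv G t * F 0 t + G t * (F 0 t * P 0 t)) t :=
      Stmt12Aux.HasDerivAt.matMul hGd (hFt 0 t htI)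
    have hGF : ∀ y ∈ I, G y * F 0 y = 1 := fun y hy =>
      Matrix.nonsing_inv_mul _ ((Matrix.isUnit_iff_isUnit_det _).mp (hinv 0 y hy))
    have hone : (fun y => G y * F 0 y) =ᶠ[nhds t] fun _ => (1 : Matrix (Fin m) (Fin m) ℝ) := by
      filter_upwards [hIopen.mem_nhds htI] with y hy using hGF y hy
    have hzero : HasDerivAt (fun y => G y * F 0 y) 0 t :=
      (hasDerivAt_const t (1 : Matrix (Fin m) (Fin m) ℝ)).congr_of_eventuallyEq hone
    have heq : deriv G t * F 0 t + G t * (F 0 t * P 0 t) = 0 := hprod.unique hzero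
    have hFGt : F 0 t * G t = 1 :=
      Matrix.mul_nonsing_inv _ ((Matrix.isUnit_iff_isUnit_det _).mp (hinv 0 t htI))
    have h5 : G t * (F 0 t * P 0 t) = P 0 t := by rw [← mul_assoc, hGF t htI, one_mul]
    have h3 : deriv G t = -(P 0 t * G t) := by
      have h4 : deriv G t * F 0 t = -(P 0 t) := by
        rw [← h5]; exact eq_neg_of_add_eq_zero_left heq
      calc deriv G t = deriv G t * F 0 t * G t := by rw [mul_assoc, hFGt, mul_one]
        _ = -(P 0 t) * G t := by rw [h4]
        _ = -(P 0 t * G t) := by rw [neg_mul]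
    rw [← h3]; exact hGd
  have hM : ∀ t ∈ I, HasDerivAt (fun y => F ρ y * G y) 0 t := by
    intro t htI
    have h := Stmt12Aux.HasDerivAt.matMul (hFt ρ t htI) (hGderiv t htI)
    convert h using 1
    rw [hper t htI]
    simp [mul_assoc]
  intro t htI t' ht'I
  have hconv : Convex ℝ I := hIint.convex
  have hdiff : DifferentiableOn ℝ (fun y => F ρ y * G y) I := fun x hx =>
    ((hM x hx).differentiableAt).differentiableWithinAt
  have hfd : ∀ x ∈ I, fderivWithin ℝ (fun y => F ρ y * G y) I x = 0 := by
    intro x hx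
    rw [fderivWithin_of_isOpen hIopen hx, ((hM x hx).hasFDerivAt).fderiv]
    ext y
    simp
  exact hconv.is_const_of_fderivWithin_eq_zero hdiff hfd htI ht'I
end
end

section
/- Fix m ≥ 1, ρ > 0, n ≥ 1, an open interval I ⊆ ℝ containing 0, and smooth maps K, P : ℝ × I → M_m(ℝ) that are ρ-periodic in s, i.e. K(s+ρ, t) = K(s,t) and P(s+ρ, t) = P(s,t) for all (s,t). Let 𝓕 : ℝ × I → M_m(ℝ) be a smooth map with 𝓕(s,t) invertible for all (s,t), satisfying ∂ₛ𝓕 = 𝓕·K and ∂ₜ𝓕 = 𝓕·P. If 𝓕(s + nρ, 0) = 𝓕(s, 0) for all s ∈ ℝ, then 𝓕(s + nρ, t) = 𝓕(s, t) for all (s,t) ∈ ℝ × I. In particular, a closed null curve whose bending evolves by the KdV equation through functions periodic in s remains closed under the LIEN flow. -/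
noncomputable section

open Matrix Set

attribute [local instance] Matrix.normedAddCommGroup Matrix.normedSpace

private lemma aux_norm_mul {m : ℕ} (A B : Matrix (Fin m) (Fin m) ℝ) :
    ‖A * B‖ ≤ m * ‖A‖ * ‖B‖ := by
  rw [Matrix.norm_le_iff (by positivity)]
  intro i j
  calc ‖(A * B) i j‖ = ‖∑ k, A i k * B k j‖ := by rw [Matrix.mul_apply]
    _ ≤ ∑ k, ‖A i k * B k j‖ := norm_sum_le _ _
    _ ≤ ∑ _k : Fin m, ‖A‖ * ‖B‖ := by
        refine Finset.sum_le_sum fun k _ => ?_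
        rw [norm_mul]
        exact mul_le_mul (Matrix.norm_entry_le_entrywise_sup_norm A)
          (Matrix.norm_entry_le_entrywise_sup_norm B) (norm_nonneg _) (norm_nonneg _)
    _ = m * ‖A‖ * ‖B‖ := by
        simp [Finset.sum_const, Finset.card_univ, mul_assoc]

private lemma aux_periodic {X : Type*} (f : ℝ → ℝ → X) (I : Set ℝ) (ρ : ℝ)
    (hper : ∀ (s : ℝ), ∀ t ∈ I, f (s + ρ) t = f s t) (n : ℕ) :
    ∀ (s : ℝ), ∀ t ∈ I, f (s + n * ρ) t = f s t := by
  induction n with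
  | zero => simp
  | succ k ih =>
    intro s t htI
    have : s + (k + 1 : ℕ) * ρ = (s + k * ρ) + ρ := by push_cast; ring
    rw [this, hper _ _ htI, ih _ _ htI]

/-- Let `K, P : ℝ × I → M_m(ℝ)` be smooth and `ρ`-periodic in `s`, and let
`𝓕 : ℝ × I → GL(m,ℝ)` be a smooth solution of `∂ₛ𝓕 = 𝓕·K`, `∂ₜ𝓕 = 𝓕·P`, where `I` is an
open interval containing `0`. If `𝓕(·,0)` is `nρ`-periodic, then `𝓕(·,t)` is
`nρ`-periodic for every `t ∈ I`. (A closed null curve whose bending evolves by the KdV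
equation through `s`-periodic functions stays closed under the LIEN flow.) -/
theorem stmt13 (m : ℕ) (hm : 1 ≤ m) (ρ : ℝ) (hρ : 0 < ρ) (n : ℕ) (hn : 1 ≤ n)
    (I : Set ℝ) (hIopen : IsOpen I) (hIint : I.OrdConnected) (h0I : (0 : ℝ) ∈ I)
    (K P F : ℝ → ℝ → Matrix (Fin m) (Fin m) ℝ)
    (hK : ContDiffOn ℝ (⊤ : ℕ∞) (fun p : ℝ × ℝ => K p.1 p.2) (Set.univ ×ˢ I))
    (hP : ContDiffOn ℝ (⊤ : ℕ∞) (fun p : ℝ × ℝ => P p.1 p.2) (Set.univ ×ˢ I))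
    (hF : ContDiffOn ℝ (⊤ : ℕ∞) (fun p : ℝ × ℝ => F p.1 p.2) (Set.univ ×ˢ I))
    (hKper : ∀ (s : ℝ), ∀ t ∈ I, K (s + ρ) t = K s t)
    (hPper : ∀ (s : ℝ), ∀ t ∈ I, P (s + ρ) t = P s t)
    (hinv : ∀ (s : ℝ), ∀ t ∈ I, IsUnit (F s t))
    (hs : ∀ (s : ℝ), ∀ t ∈ I, deriv (fun x => F x t) s = F s t * K s t)
    (ht : ∀ (s : ℝ), ∀ t ∈ I, deriv (fun y => F s y) t = F s t * P s t)
    (hper0 : ∀ s : ℝ, F (s + n * ρ) 0 = F s 0) :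
    ∀ (s : ℝ), ∀ t ∈ I, F (s + n * ρ) t = F s t := by
  -- derivative in `t` as `HasDerivAt`
  have hFt : ∀ (σ : ℝ), ∀ τ ∈ I, HasDerivAt (fun y => F σ y) (F σ τ * P σ τ) τ := by
    intro σ τ hτ
    have hdiff : DifferentiableAt ℝ (fun p : ℝ × ℝ => F p.1 p.2) (σ, τ) :=
      (hF.differentiableOn (by simp)).differentiableAt
        ((isOpen_univ.prod hIopen).mem_nhds ⟨trivial, hτ⟩)
    have h2c : DifferentiableAt ℝ ((fun p : ℝ × ℝ => F p.1 p.2) ∘ (fun y => (σ, y))) τ :=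
      DifferentiableAt.comp τ hdiff ((differentiableAt_const σ).prodMk differentiableAt_id)
    have h2 : DifferentiableAt ℝ (fun y => F σ y) τ := h2c
    have h3 := h2.hasDerivAt
    rw [← ht σ τ hτ]
    exact h3
  intro s t htI
  have hPc : ∀ τ ∈ I, P (s + n * ρ) τ = P s τ := aux_periodic P I ρ hPper n s
  set a : ℝ := min t 0 with ha
  set b : ℝ := max t 0 with hb
  have ha0 : a ≤ 0 := min_le_right _ _
  have hb0 : 0 ≤ b := le_max_right _ _
  have hab : a ≤ b := le_trans ha0 hb0
  have hsub : Icc a b ⊆ I := by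
    have := hIint.uIcc_subset htI h0I
    rwa [uIcc] at this
  have haI : a ∈ I := hsub ⟨le_rfl, hab⟩
  have hbI : b ∈ I := hsub ⟨hab, le_rfl⟩
  obtain ⟨εa, hεa, hballa⟩ := Metric.isOpen_iff.mp hIopen a haI
  obtain ⟨εb, hεb, hballb⟩ := Metric.isOpen_iff.mp hIopen b hbI
  set ε : ℝ := min εa εb / 2 with hε
  have hεpos : 0 < ε := by positivity
  have hεa' : ε < εa := by
    have := min_le_left εa εb; simp only [hε]; linarith
  have hεb' : ε < εb := by
    have := min_le_right εa εb; simp only [hε]; linarith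
  have hJ : Icc (a - ε) (b + ε) ⊆ I := by
    intro x hx
    rcases lt_or_ge x a with h | h
    · exact hballa (by rw [Metric.mem_ball, Real.dist_eq, abs_lt]; constructor <;>
        [linarith [hx.1]; linarith])
    rcases le_or_gt x b with h' | h'
    · exact hsub ⟨h, h'⟩
    · exact hballb (by rw [Metric.mem_ball, Real.dist_eq, abs_lt]; constructor <;>
        [linarith; linarith [hx.2]])
  have hab' : a - ε ≤ b + ε := by linarith
  -- continuity and bound of `P s ·` on the compact interval
  have hPcont : ContinuousOn (fun τ => P s τ) I := by
    have h1 : ContinuousOn (fun p : ℝ × ℝ => P p.1 p.2) (Set.univ ×ˢ I) := hP.continuousOn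
    exact h1.comp ((continuous_const.prodMk continuous_id).continuousOn)
      (fun x hx => ⟨trivial, hx⟩)
  obtain ⟨C, hC⟩ := (isCompact_Icc (a := a - ε) (b := b + ε)).exists_bound_of_continuousOn
    (hPcont.mono hJ)
  have h0mem : (0 : ℝ) ∈ Icc (a - ε) (b + ε) := ⟨by linarith, by linarith⟩
  have hC0 : 0 ≤ C := le_trans (norm_nonneg _) (hC 0 h0mem)
  -- vector field (clamped outside the interval so it is globally Lipschitz)
  set v : ℝ → Matrix (Fin m) (Fin m) ℝ → Matrix (Fin m) (Fin m) ℝ :=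
    fun τ y => y * P s ((Set.projIcc (a - ε) (b + ε) hab' τ : ℝ)) with hv_def
  have hv : ∀ τ, LipschitzWith (Real.toNNReal (m * C)) (v τ) := by
    intro τ
    apply LipschitzWith.of_dist_le_mul
    intro y z
    rw [dist_eq_norm, dist_eq_norm, hv_def]
    simp only
    rw [← sub_mul]
    have hBmem := (Set.projIcc (a - ε) (b + ε) hab' τ).2
    have hB : ‖P s ((Set.projIcc (a - ε) (b + ε) hab' τ : ℝ))‖ ≤ C := hC _ hBmem
    have h1 := aux_norm_mul (y - z) (P s ((Set.projIcc (a - ε) (b + ε) hab' τ : ℝ)))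
    have h2 : (Real.toNNReal (m * C) : ℝ) = m * C := Real.coe_toNNReal _ (by positivity)
    rw [h2]
    calc ‖(y - z) * P s ((Set.projIcc (a - ε) (b + ε) hab' τ : ℝ))‖
        ≤ m * ‖y - z‖ * ‖P s ((Set.projIcc (a - ε) (b + ε) hab' τ : ℝ))‖ := h1
      _ ≤ m * ‖y - z‖ * C := by
          exact mul_le_mul_of_nonneg_left hB (by positivity)
      _ = m * C * ‖y - z‖ := by ring
  -- the two solutions
  have key : EqOn (fun τ => F (s + n * ρ) τ) (fun τ => F s τ) (Ioo (a - ε) (b + ε)) := by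
    apply ODE_solution_unique_of_mem_Ioo (v := v) (s := fun _ => Set.univ)
      (t₀ := (0 : ℝ)) (fun τ _ => (hv τ).lipschitzOnWith) ⟨by linarith, by linarith⟩
    · intro τ hτ
      have hτI : τ ∈ I := hJ (Ioo_subset_Icc_self hτ)
      have hproj : ((Set.projIcc (a - ε) (b + ε) hab' τ : ℝ)) = τ :=
        congrArg Subtype.val (Set.projIcc_of_mem hab' (Ioo_subset_Icc_self hτ))
      refine ⟨?_, trivial⟩
      have hd := hFt (s + n * ρ) τ hτI
      rw [hPc τ hτI] at hd
      simp only [hv_def, hproj]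
      exact hd
    · intro τ hτ
      have hτI : τ ∈ I := hJ (Ioo_subset_Icc_self hτ)
      have hproj : ((Set.projIcc (a - ε) (b + ε) hab' τ : ℝ)) = τ :=
        congrArg Subtype.val (Set.projIcc_of_mem hab' (Ioo_subset_Icc_self hτ))
      refine ⟨?_, trivial⟩
      have hd := hFt s τ hτI
      simp only [hv_def, hproj]
      exact hd
    · exact hper0 s
  have htmem : t ∈ Ioo (a - ε) (b + ε) :=
    ⟨by have := min_le_left t 0; linarith, by have := le_max_left t 0; linarith⟩
  exact key htmem
end
end

section
/- Let ℓ ∈ ℝ and let κ : ℝ → ℝ be a smooth solution of κ''' + 2ℓκ' − 6κκ' = 0. Let F₊, F₋ : ℝ → M₂(ℝ) be smooth with det F± = 1 everywhere, satisfying F±' = F±·𝒦_{±1}, where 𝒦_λ(s) := [[0, κ(s)+λ],[1, 0]] and 𝒫_λ(s) := [[−κ'(s), −κ''(s) + 2κ(s)² − 2λκ(s) − 4λ²],[2κ(s) − 4λ, κ'(s)]]. Put 𝔪₊ := F₊(0)·(𝒫₁(0) − 2ℓ𝒦₁(0))·F₊(0)⁻¹ and 𝔪₋ := F₋(0)·(𝒫₋₁(0)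 − 2ℓ𝒦₋₁(0))·F₋(0)⁻¹, and define γ̂(s,t) := exp(t𝔪₊)·F₊(s+2ℓt)·F₋(s+2ℓt)⁻¹·exp(−t𝔪₋). Then γ̂ is the evolution under the LIEN flow of the stationary curve γ(s) = F₊(s)F₋(s)⁻¹: for each t, s ↦ γ̂(s,t) is a null curve parameterized by proper time with bending κ(s+2ℓt) (det γ̂ = 1, ⟨∂ₛγ̂,∂ₛγ̂⟩ = 0, ⟨∂ₛ²γ̂,∂ₛ²γ̂⟩ = 4, −(1/16)⟨∂ₛ³γ̂,∂ₛ³γ̂⟩ = κ(s+2ℓt)), and ∂ₜγ̂ = 2∂ₛ³γ̂ − 6κ(s+2ℓt)∂ₛγ̂ everywhere. -/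
noncomputable section

open Matrix


section linftyHelpers
attribute [local instance] Matrix.linftyOpNormedRing Matrix.linftyOpNormedAlgebra

theorem exp_entry_hasDerivAt (m : Matrix (Fin 2) (Fin 2) ℝ) (t : ℝ) (i j : Fin 2) :
    HasDerivAt (fun u : ℝ => NormedSpace.exp (u • m) i j)
      ((NormedSpace.exp (t • m) * m) i j) t := by
  have h := hasDerivAt_exp_smul_const (𝕂 := ℝ) m t
  have hc : Continuous (fun A : Matrix (Fin 2) (Fin 2) ℝ => A i j) :=
    (continuous_apply j).comp (continuous_apply i)
  let e : Matrix (Fin 2) (Fin 2) ℝ →L[ℝ] ℝ :=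
    { toFun := fun A => A i j, map_add' := fun _ _ => rfl, map_smul' := fun _ _ => rfl,
      cont := hc }
  exact (e.hasFDerivAt.comp_hasDerivAt t h)

theorem exp_entry_hasDerivAt' (m : Matrix (Fin 2) (Fin 2) ℝ) (t : ℝ) (i j : Fin 2) :
    HasDerivAt (fun u : ℝ => NormedSpace.exp (u • m) i j)
      ((m * NormedSpace.exp (t • m)) i j) t := by
  have h := hasDerivAt_exp_smul_const' (𝕂 := ℝ) m t
  have hc : Continuous (fun A : Matrix (Fin 2) (Fin 2) ℝ => A i j) :=
    (continuous_apply j).comp (continuous_apply i)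
  let e : Matrix (Fin 2) (Fin 2) ℝ →L[ℝ] ℝ :=
    { toFun := fun A => A i j, map_add' := fun _ _ => rfl, map_smul' := fun _ _ => rfl,
      cont := hc }
  exact (e.hasFDerivAt.comp_hasDerivAt t h)

end linftyHelpers


attribute [local instance] Matrix.normedAddCommGroup Matrix.normedSpace

/-- Partial derivative with respect to `s` of a matrix-valued function. -/
def pdSM (f : ℝ → ℝ → M2) (s t : ℝ) : M2 := deriv (fun x => f x t) s
/-- Partial derivative with respect to `t` of a matrix-valued function. -/
def pdTM (f : ℝ → ℝ → M2) (s t : ℝ) : M2 := deriv (fun y => f s y) t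

/-- The matrix `𝒦_λ(s) = [[0, κ(s)+λ],[1, 0]]`. -/
def KL (κ : ℝ → ℝ) (l s : ℝ) : M2 := !![0, κ s + l; 1, 0]

/-- The matrix `𝒫_λ(s) = [[−κ', −κ'' + 2κ² − 2λκ − 4λ²],[2κ − 4λ, κ']]`. -/
def PL (κ : ℝ → ℝ) (l s : ℝ) : M2 :=
  !![-(deriv κ s), -(deriv (deriv κ) s) + 2 * (κ s) ^ 2 - 2 * l * κ s - 4 * l ^ 2;
     2 * κ s - 4 * l, deriv κ s]

/-- The evolution `γ̂(s,t) = exp(t𝔪₊)·F₊(s+2ℓt)·F₋(s+2ℓt)⁻¹·exp(−t𝔪₋)` of a stationary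
curve by the LIEN flow. -/
def gamHat (l : ℝ) (Fp Fm : ℝ → M2) (mp mm : M2) (s t : ℝ) : M2 :=
  NormedSpace.exp (t • mp) * Fp (s + 2 * l * t) * (Fm (s + 2 * l * t))⁻¹ *
    NormedSpace.exp ((-t) • mm)


theorem M2.hasDerivAt_iff_entries {f : ℝ → M2} {f' : M2} {x : ℝ} :
    HasDerivAt f f' x ↔ ∀ i j, HasDerivAt (fun u => f u i j) (f' i j) x := by
  exact (hasDerivAt_pi (φ := fun u => (f u : Fin 2 → Fin 2 → ℝ))).trans
    (forall_congr' fun i => hasDerivAt_pi)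

theorem M2.hasDerivAt_mul {f g : ℝ → M2} {f' g' : M2} {x : ℝ}
    (hf : HasDerivAt f f' x) (hg : HasDerivAt g g' x) :
    HasDerivAt (fun u => f u * g u) (f' * g x + f x * g') x := by
  rw [M2.hasDerivAt_iff_entries] at hf hg ⊢
  intro i j
  have h : HasDerivAt (fun u => f u i 0 * g u 0 j + f u i 1 * g u 1 j)
      ((f' i 0 * g x 0 j + f x i 0 * g' 0 j) + (f' i 1 * g x 1 j + f x i 1 * g' 1 j)) x :=
    ((hf i 0).mul (hg 0 j)).add ((hf i 1).mul (hg 1 j))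
  convert h using 2 <;> simp [Matrix.mul_apply, Fin.sum_univ_two] <;> ring

theorem expDeriv (m : M2) (t : ℝ) :
    HasDerivAt (fun u : ℝ => NormedSpace.exp (u • m))
      (NormedSpace.exp (t • m) * m) t :=
  M2.hasDerivAt_iff_entries.2 fun i j => exp_entry_hasDerivAt m t i j

theorem expDeriv' (m : M2) (t : ℝ) :
    HasDerivAt (fun u : ℝ => NormedSpace.exp (u • m))
      (m * NormedSpace.exp (t • m)) t :=
  M2.hasDerivAt_iff_entries.2 fun i j => exp_entry_hasDerivAt' m t i j

theorem det_exp_eq_one (m : M2) (htr : m 0 0 + m 1 1 = 0) (t : ℝ) :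
    (NormedSpace.exp (t • m)).det = 1 := by
  have hδ : ∀ t : ℝ, HasDerivAt (fun u : ℝ => (NormedSpace.exp (u • m)).det) 0 t := by
    intro t
    have hE := fun i j => exp_entry_hasDerivAt' m t i j
    have h := ((hE 0 0).mul (hE 1 1)).sub ((hE 0 1).mul (hE 1 0))
    have hfun : (fun u : ℝ => (NormedSpace.exp (u • m)).det)
        = fun u => NormedSpace.exp (u • m) 0 0 * NormedSpace.exp (u • m) 1 1
          - NormedSpace.exp (u • m) 0 1 * NormedSpace.exp (u • m) 1 0 := by
      funext u; exact Matrix.det_fin_two _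
    rw [hfun]
    refine h.congr_deriv (Eq.symm ?_)
    set E := NormedSpace.exp (t • m)
    simp only [Matrix.mul_apply, Fin.sum_univ_two]
    linear_combination (E 0 1 * E 1 0 - E 0 0 * E 1 1) * htr
  have hconst := is_const_of_deriv_eq_zero (fun x => (hδ x).differentiableAt)
    (fun x => (hδ x).deriv) t 0
  simpa [NormedSpace.exp_zero] using hconst

def Frame (l : ℝ) (F H : ℝ → M2) (mp mm : M2) (M : ℝ → M2) (s t : ℝ) : M2 :=
  NormedSpace.exp (t • mp) * (F (s + 2*l*t) * M (s + 2*l*t) * H (s + 2*l*t)) *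
    NormedSpace.exp ((-t) • mm)

theorem Frame_pdS {l : ℝ} {F H : ℝ → M2} {mp mm : M2} {Kp Km M M' : ℝ → M2}
    (hF : ∀ x, HasDerivAt F (F x * Kp x) x)
    (hH : ∀ x, HasDerivAt H (-(Km x * H x)) x)
    (hM : ∀ x, HasDerivAt M (M' x) x) (s t : ℝ) :
    HasDerivAt (fun z => Frame l F H mp mm M z t)
      (Frame l F H mp mm (fun x => M' x + Kp x * M x - M x * Km x) s t) s := by
  have hu : HasDerivAt (fun z : ℝ => z + 2*l*t) 1 s := (hasDerivAt_id s).add_const _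
  have cF : HasDerivAt (fun z : ℝ => F (z + 2*l*t)) (F (s + 2*l*t) * Kp (s + 2*l*t)) s := by
    have := (hF (s + 2*l*t)).scomp s hu
    rw [one_smul] at this
    exact this
  have cM : HasDerivAt (fun z : ℝ => M (z + 2*l*t)) (M' (s + 2*l*t)) s := by
    have := (hM (s + 2*l*t)).scomp s hu
    rw [one_smul] at this
    exact this
  have cH : HasDerivAt (fun z : ℝ => H (z + 2*l*t)) (-(Km (s + 2*l*t) * H (s + 2*l*t))) s := by
    have := (hH (s + 2*l*t)).scomp s hu
    rw [one_smul] at this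
    exact this
  have hin := M2.hasDerivAt_mul (M2.hasDerivAt_mul cF cM) cH
  have htot := M2.hasDerivAt_mul
    (M2.hasDerivAt_mul (hasDerivAt_const s (NormedSpace.exp (t • mp))) hin)
    (hasDerivAt_const s (NormedSpace.exp ((-t) • mm)))
  refine htot.congr_deriv (Eq.symm ?_)
  simp only [Frame]
  generalize NormedSpace.exp (t • mp) = a
  generalize NormedSpace.exp ((-t) • mm) = b
  generalize F (s + 2*l*t) = f
  generalize H (s + 2*l*t) = h
  generalize Kp (s + 2*l*t) = kp
  generalize Km (s + 2*l*t) = km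
  generalize M (s + 2*l*t) = m
  generalize M' (s + 2*l*t) = m'
  noncomm_ring

theorem Frame_pdT {l : ℝ} {F H : ℝ → M2} {mp mm : M2} {Kp Km Lp Lm : ℝ → M2}
    (hF : ∀ x, HasDerivAt F (F x * Kp x) x)
    (hH : ∀ x, HasDerivAt H (-(Km x * H x)) x)
    (hmpF : ∀ x, mp * F x = F x * Lp x)
    (hHmm : ∀ x, H x * mm = Lm x * H x)
    (s t : ℝ) :
    HasDerivAt (fun y => Frame l F H mp mm (fun _ => 1) s y)
      (Frame l F H mp mm (fun x => Lp x + (2*l) • (Kp x - Km x) - Lm x) s t) t := by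
  have hA : HasDerivAt (fun y : ℝ => NormedSpace.exp (y • mp))
      (NormedSpace.exp (t • mp) * mp) t := expDeriv mp t
  have hB : HasDerivAt (fun y : ℝ => NormedSpace.exp ((-y) • mm))
      (-(mm * NormedSpace.exp ((-t) • mm))) t := by
    have := (expDeriv' mm (-t)).scomp t (hasDerivAt_neg t)
    simp only [Function.comp_def, neg_one_smul] at this
    exact this
  have hu : HasDerivAt (fun y : ℝ => s + 2*l*y) (2*l) t := by
    simpa using ((hasDerivAt_id t).const_mul (2*l)).const_add s
  have cF : HasDerivAt (fun y : ℝ => F (s + 2*l*y))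
      ((2*l) • (F (s + 2*l*t) * Kp (s + 2*l*t))) t := (hF (s + 2*l*t)).scomp t hu
  have cH : HasDerivAt (fun y : ℝ => H (s + 2*l*y))
      ((2*l) • -(Km (s + 2*l*t) * H (s + 2*l*t))) t := (hH (s + 2*l*t)).scomp t hu
  have hin := M2.hasDerivAt_mul (M2.hasDerivAt_mul cF (hasDerivAt_const t (1 : M2))) cH
  have htot := M2.hasDerivAt_mul (M2.hasDerivAt_mul hA hin) hB
  refine htot.congr_deriv (Eq.symm ?_)
  simp only [Frame]
  have hmf := hmpF (s + 2*l*t)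
  have hhm := hHmm (s + 2*l*t)
  generalize NormedSpace.exp (t • mp) = a
  generalize NormedSpace.exp ((-t) • mm) = b
  generalize F (s + 2*l*t) = f at hmf ⊢
  generalize H (s + 2*l*t) = h at hhm ⊢
  generalize Kp (s + 2*l*t) = kp
  generalize Km (s + 2*l*t) = km
  generalize Lp (s + 2*l*t) = lp at hmf ⊢
  generalize Lm (s + 2*l*t) = lm at hhm ⊢
  have h1' : ∀ X : M2, mp * (f * X) = f * (lp * X) := fun X => by
    rw [← mul_assoc, hmf, mul_assoc]
  have h2' : ∀ X : M2, h * (mm * X) = lm * (h * X) := fun X => by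
    rw [← mul_assoc, hhm, mul_assoc]
  simp only [mul_one, one_mul, mul_zero, zero_mul, add_zero, zero_add, mul_neg, neg_mul,
    smul_neg, smul_sub, smul_add, mul_add, add_mul, mul_sub, sub_mul,
    smul_mul_assoc, mul_smul_comm, mul_assoc]
  rw [h1', h2']
  abel

/-- 2×2 adjugate, explicitly. -/
def adj2 (A : M2) : M2 := !![A 1 1, -(A 0 1); -(A 1 0), A 0 0]

theorem inv_eq_adj2 (A : M2) (h : A.det = 1) : A⁻¹ = adj2 A := by
  rw [Matrix.inv_def, h, Ring.inverse_one, one_smul, Matrix.adjugate_fin_two, adj2]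

theorem mul_adj2 (A : M2) (h : A.det = 1) : A * adj2 A = 1 := by
  rw [← inv_eq_adj2 A h]
  exact Matrix.mul_nonsing_inv A (by rw [h]; exact isUnit_one)

theorem adj2_mul (A : M2) (h : A.det = 1) : adj2 A * A = 1 := by
  rw [← inv_eq_adj2 A h]
  exact Matrix.nonsing_inv_mul A (by rw [h]; exact isUnit_one)

theorem det_adj2 (A : M2) (h : A.det = 1) : (adj2 A).det = 1 := by
  have h3 : A 0 0 * A 1 1 - A 0 1 * A 1 0 = 1 := by rw [← Matrix.det_fin_two A]; exact h
  rw [adj2, Matrix.det_fin_two_of]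
  linear_combination h3

theorem adj2_mul_adj2 (A B : M2) : adj2 (A * B) = adj2 B * adj2 A := by
  ext i j
  fin_cases i <;> fin_cases j <;>
    simp [adj2, Matrix.mul_apply, Fin.sum_univ_two] <;> ring

theorem adj2_KL (κ : ℝ → ℝ) (lam x : ℝ) : adj2 (KL κ lam x) = -(KL κ lam x) := by
  ext i j
  fin_cases i <;> fin_cases j <;> simp [adj2, KL]

theorem hasDerivAt_adj2 {G : ℝ → M2} {G' : M2} {x : ℝ} (h : HasDerivAt G G' x) :
    HasDerivAt (fun y => adj2 (G y)) (adj2 G') x := by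
  rw [M2.hasDerivAt_iff_entries] at h ⊢
  intro i j
  fin_cases i <;> fin_cases j <;> simp [adj2]
  exacts [h 1 1, (h 0 1).neg, (h 1 0).neg, h 0 0]

open scoped ContDiff

def LamL (κ : ℝ → ℝ) (l lam x : ℝ) : M2 := PL κ lam x - (2 * l) • KL κ lam x

theorem LamL_hasDerivAt (κ : ℝ → ℝ) (hκ : ContDiff ℝ (⊤ : ℕ∞) κ) (l lam : ℝ)
    (hstat : ∀ s : ℝ,
      deriv (deriv (deriv κ)) s + 2 * l * deriv κ s - 6 * κ s * deriv κ s = 0) (x : ℝ) :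
    HasDerivAt (LamL κ l lam)
      (LamL κ l lam x * KL κ lam x - KL κ lam x * LamL κ l lam x) x := by
  have hκ' : ContDiff ℝ ∞ κ := hκ.of_le (by simp)
  have hκ1 : ContDiff ℝ ∞ (deriv κ) := (contDiff_infty_iff_deriv.mp hκ').2
  have hκ2 : ContDiff ℝ ∞ (deriv (deriv κ)) :=
    (contDiff_infty_iff_deriv.mp hκ1).2
  have hle : (∞ : WithTop ℕ∞) ≠ 0 := by simp
  have d0 : ∀ y, HasDerivAt κ (deriv κ y) y := fun y => (hκ'.differentiable hle y).hasDerivAt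
  have d1 : ∀ y, HasDerivAt (deriv κ) (deriv (deriv κ) y) y :=
    fun y => (hκ1.differentiable hle y).hasDerivAt
  have d2 : ∀ y, HasDerivAt (deriv (deriv κ)) (deriv (deriv (deriv κ)) y) y :=
    fun y => (hκ2.differentiable hle y).hasDerivAt
  rw [M2.hasDerivAt_iff_entries]
  intro i j
  fin_cases i <;> fin_cases j <;> simp only [Fin.zero_eta, Fin.mk_one]
  · have e : (fun y => LamL κ l lam y 0 0) = fun y => -(deriv κ y) := by
      funext y; simp [LamL, PL, KL]
    rw [e]
    refine (d1 x).neg.congr_deriv (Eq.symm ?_)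
    all_goals simp [LamL, PL, KL, Matrix.mul_apply, Fin.sum_univ_two]
    all_goals ring
  · have e : (fun y => LamL κ l lam y 0 1) = fun y =>
        -(deriv (deriv κ) y) + 2 * κ y ^ 2 - 2 * lam * κ y - 4 * lam ^ 2
          - 2 * l * (κ y + lam) := by
      funext y; simp [LamL, PL, KL]; try ring
    rw [e]
    have hd := (((((d2 x).neg).add (((d0 x).pow 2).const_mul 2)).sub
        ((d0 x).const_mul (2 * lam))).sub_const (4 * lam ^ 2)).sub
        (((d0 x).add_const lam).const_mul (2 * l))
    refine hd.congr_deriv (Eq.symm ?_)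
    all_goals simp [LamL, PL, KL, Matrix.mul_apply, Fin.sum_univ_two]
    all_goals linear_combination hstat x
  · have e : (fun y => LamL κ l lam y 1 0) = fun y => 2 * κ y - 4 * lam - 2 * l := by
      funext y; simp [LamL, PL, KL]; try ring
    rw [e]
    have hd : HasDerivAt (fun y => 2 * κ y - 4 * lam - 2 * l)
        (2 * deriv κ x) x := (((d0 x).const_mul 2).sub_const (4 * lam)).sub_const (2 * l)
    refine hd.congr_deriv (Eq.symm ?_)
    all_goals simp [LamL, PL, KL, Matrix.mul_apply, Fin.sum_univ_two]
    all_goals ring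
  · have e : (fun y => LamL κ l lam y 1 1) = fun y => deriv κ y := by
      funext y; simp [LamL, PL, KL]
    rw [e]
    refine (d1 x).congr_deriv (Eq.symm ?_)
    all_goals simp [LamL, PL, KL, Matrix.mul_apply, Fin.sum_univ_two]
    all_goals ring

/-- Let `κ` solve the stationary equation `κ''' + 2ℓκ' − 6κκ' = 0`, let
`F₊, F₋ : ℝ → SL(2,ℝ)` be smooth solutions of `F±' = F±·𝒦_{±1}`, and set
`𝔪± = F±(0)·(𝒫_{±1}(0) − 2ℓ𝒦_{±1}(0))·F±(0)⁻¹`. Then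
`γ̂(s,t) = exp(t𝔪₊)·F₊(s+2ℓt)·F₋(s+2ℓt)⁻¹·exp(−t𝔪₋)` is the evolution under the LIEN flow
of the stationary curve `γ = F₊F₋⁻¹`: for each `t` it is a null curve parameterized by
proper time with bending `κ(s+2ℓt)`, and `∂ₜγ̂ = 2∂ₛ³γ̂ − 6κ(s+2ℓt)∂ₛγ̂`. -/
theorem stmt17 (l : ℝ) (κ : ℝ → ℝ) (hκ : ContDiff ℝ (⊤ : ℕ∞) κ)
    (hstat : ∀ s : ℝ,
      deriv (deriv (deriv κ)) s + 2 * l * deriv κ s - 6 * κ s * deriv κ s = 0)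
    (Fp Fm : ℝ → M2) (hFp : ContDiff ℝ (⊤ : ℕ∞) Fp) (hFm : ContDiff ℝ (⊤ : ℕ∞) Fm)
    (hdetp : ∀ s : ℝ, (Fp s).det = 1) (hdetm : ∀ s : ℝ, (Fm s).det = 1)
    (hodep : ∀ s : ℝ, deriv Fp s = Fp s * KL κ 1 s)
    (hodem : ∀ s : ℝ, deriv Fm s = Fm s * KL κ (-1) s)
    (mp mm : M2)
    (hmp : mp = Fp 0 * (PL κ 1 0 - (2 * l) • KL κ 1 0) * (Fp 0)⁻¹)
    (hmm : mm = Fm 0 * (PL κ (-1) 0 - (2 * l) • KL κ (-1) 0) * (Fm 0)⁻¹) :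
    ∀ s t : ℝ,
      (gamHat l Fp Fm mp mm s t).det = 1 ∧
      ip (pdSM (gamHat l Fp Fm mp mm) s t) (pdSM (gamHat l Fp Fm mp mm) s t) = 0 ∧
      ip (pdSM (pdSM (gamHat l Fp Fm mp mm)) s t)
        (pdSM (pdSM (gamHat l Fp Fm mp mm)) s t) = 4 ∧
      -(1 / 16) * ip (pdSM (pdSM (pdSM (gamHat l Fp Fm mp mm))) s t)
        (pdSM (pdSM (pdSM (gamHat l Fp Fm mp mm))) s t) = κ (s + 2 * l * t) ∧
      pdTM (gamHat l Fp Fm mp mm) s t =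
        (2 : ℝ) • pdSM (pdSM (pdSM (gamHat l Fp Fm mp mm))) s t
          - (6 * κ (s + 2 * l * t)) • pdSM (gamHat l Fp Fm mp mm) s t := by
  have hinvm : ∀ x, (Fm x)⁻¹ = adj2 (Fm x) := fun x => inv_eq_adj2 _ (hdetm x)
  have hinvp : ∀ x, (Fp x)⁻¹ = adj2 (Fp x) := fun x => inv_eq_adj2 _ (hdetp x)
  have hFpd : ∀ x, HasDerivAt Fp (Fp x * KL κ 1 x) x := by
    intro x
    have h := (hFp.differentiable (by simp) x).hasDerivAt
    rw [← hodep x]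
    exact h
  have hFmd : ∀ x, HasDerivAt Fm (Fm x * KL κ (-1) x) x := by
    intro x
    have h := (hFm.differentiable (by simp) x).hasDerivAt
    rw [← hodem x]
    exact h
  have hHmd : ∀ x, HasDerivAt (fun y => adj2 (Fm y)) (-(KL κ (-1) x * adj2 (Fm x))) x := by
    intro x
    have h := hasDerivAt_adj2 (hFmd x)
    rwa [adj2_mul_adj2, adj2_KL, neg_mul] at h
  have hHpd : ∀ x, HasDerivAt (fun y => adj2 (Fp y)) (-(KL κ 1 x * adj2 (Fp x))) x := by
    intro x
    have h := hasDerivAt_adj2 (hFpd x)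
    rwa [adj2_mul_adj2, adj2_KL, neg_mul] at h
  have hLaxP := LamL_hasDerivAt κ hκ l 1 hstat
  have hLaxM := LamL_hasDerivAt κ hκ l (-1) hstat
  -- conjugation constancy, plus side
  have hCpder : ∀ x, HasDerivAt (fun y => Fp y * LamL κ l 1 y * adj2 (Fp y)) 0 x := by
    intro x
    have h := M2.hasDerivAt_mul (M2.hasDerivAt_mul (hFpd x) (hLaxP x)) (hHpd x)
    refine h.congr_deriv (Eq.symm ?_)
    generalize adj2 (Fp x) = ad
    generalize Fp x = f
    generalize KL κ 1 x = k
    generalize LamL κ l 1 x = L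
    noncomm_ring
  have hCp : ∀ x, Fp x * LamL κ l 1 x * adj2 (Fp x) = mp := by
    intro x
    have hconst := is_const_of_deriv_eq_zero
      (fun y => (hCpder y).differentiableAt) (fun y => (hCpder y).deriv) x 0
    rw [hconst, hmp, hinvp 0]
    rfl
  have hCmder : ∀ x, HasDerivAt (fun y => Fm y * LamL κ l (-1) y * adj2 (Fm y)) 0 x := by
    intro x
    have h := M2.hasDerivAt_mul (M2.hasDerivAt_mul (hFmd x) (hLaxM x)) (hHmd x)
    refine h.congr_deriv (Eq.symm ?_)
    generalize adj2 (Fm x) = ad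
    generalize Fm x = f
    generalize KL κ (-1) x = k
    generalize LamL κ l (-1) x = L
    noncomm_ring
  have hCm : ∀ x, Fm x * LamL κ l (-1) x * adj2 (Fm x) = mm := by
    intro x
    have hconst := is_const_of_deriv_eq_zero
      (fun y => (hCmder y).differentiableAt) (fun y => (hCmder y).deriv) x 0
    rw [hconst, hmm, hinvm 0]
    rfl
  have hmpF : ∀ x, mp * Fp x = Fp x * LamL κ l 1 x := by
    intro x
    rw [← hCp x, mul_assoc, adj2_mul _ (hdetp x), mul_one]
  have hHmm2 : ∀ x, adj2 (Fm x) * mm = LamL κ l (-1) x * adj2 (Fm x) := by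
    intro x
    rw [← hCm x, ← mul_assoc, ← mul_assoc, adj2_mul _ (hdetm x), one_mul]
  -- traces vanish
  have htrp : mp 0 0 + mp 1 1 = 0 := by
    have ht : Matrix.trace mp = 0 := by
      rw [← hCp 0, Matrix.trace_mul_cycle, adj2_mul _ (hdetp 0), one_mul]
      simp [LamL, PL, KL, Matrix.trace_fin_two]
    rwa [Matrix.trace_fin_two] at ht
  have htrm : mm 0 0 + mm 1 1 = 0 := by
    have ht : Matrix.trace mm = 0 := by
      rw [← hCm 0, Matrix.trace_mul_cycle, adj2_mul _ (hdetm 0), one_mul]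
      simp [LamL, PL, KL, Matrix.trace_fin_two]
    rwa [Matrix.trace_fin_two] at ht
  -- Frame congruence
  have FrameCongr : ∀ (M N : ℝ → M2) (s t : ℝ), M (s + 2*l*t) = N (s + 2*l*t) →
      Frame l Fp (fun x => adj2 (Fm x)) mp mm M s t
        = Frame l Fp (fun x => adj2 (Fm x)) mp mm N s t := by
    intro M N s t h
    simp only [Frame, h]
  have hgamfun : ∀ t : ℝ, (fun z => gamHat l Fp Fm mp mm z t)
      = fun z => Frame l Fp (fun x => adj2 (Fm x)) mp mm (fun _ => 1) z t := by
    intro t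
    funext z
    simp [gamHat, Frame, mul_one, mul_assoc, hinvm]
  -- s-derivatives
  have hpd1 : ∀ s t : ℝ, pdSM (gamHat l Fp Fm mp mm) s t
      = Frame l Fp (fun x => adj2 (Fm x)) mp mm (fun _ => !![0,2;0,0]) s t := by
    intro s t
    show deriv (fun z => gamHat l Fp Fm mp mm z t) s = _
    rw [hgamfun t]
    refine ((Frame_pdS hFpd hHmd (fun x => hasDerivAt_const x (1:M2)) s t).deriv).trans
      (FrameCongr _ _ s t ?_)
    ext i j
    fin_cases i <;> fin_cases j <;> simp [KL, Matrix.mul_apply, Fin.sum_univ_two]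
    all_goals ring
  have hpd2 : ∀ s t : ℝ, pdSM (pdSM (gamHat l Fp Fm mp mm)) s t
      = Frame l Fp (fun x => adj2 (Fm x)) mp mm (fun _ => !![-2,0;0,2]) s t := by
    intro s t
    show deriv (fun z => pdSM (gamHat l Fp Fm mp mm) z t) s = _
    have hfz : (fun z => pdSM (gamHat l Fp Fm mp mm) z t)
        = fun z => Frame l Fp (fun x => adj2 (Fm x)) mp mm (fun _ => !![0,2;0,0]) z t :=
      funext fun z => hpd1 z t
    rw [hfz]
    refine ((Frame_pdS hFpd hHmd (fun x => hasDerivAt_const x (!![0,2;0,0]:M2)) s t).deriv).trans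
      (FrameCongr _ _ s t ?_)
    ext i j
    fin_cases i <;> fin_cases j <;> simp [KL, Matrix.mul_apply, Fin.sum_univ_two]
    all_goals ring
  have hpd3 : ∀ s t : ℝ, pdSM (pdSM (pdSM (gamHat l Fp Fm mp mm))) s t
      = Frame l Fp (fun x => adj2 (Fm x)) mp mm (fun x => !![0, 4*κ x; -4, 0]) s t := by
    intro s t
    show deriv (fun z => pdSM (pdSM (gamHat l Fp Fm mp mm)) z t) s = _
    have hfz : (fun z => pdSM (pdSM (gamHat l Fp Fm mp mm)) z t)
        = fun z => Frame l Fp (fun x => adj2 (Fm x)) mp mm (fun _ => !![-2,0;0,2]) z t :=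
      funext fun z => hpd2 z t
    rw [hfz]
    refine ((Frame_pdS hFpd hHmd (fun x => hasDerivAt_const x (!![-2,0;0,2]:M2)) s t).deriv).trans
      (FrameCongr _ _ s t ?_)
    ext i j
    fin_cases i <;> fin_cases j <;> simp [KL, Matrix.mul_apply, Fin.sum_univ_two]
    all_goals ring
  have hdetFrame : ∀ (M : ℝ → M2) (s t : ℝ),
      (Frame l Fp (fun x => adj2 (Fm x)) mp mm M s t).det = (M (s + 2*l*t)).det := by
    intro M s t
    simp only [Frame, Matrix.det_mul]
    rw [det_exp_eq_one mp htrp t, det_exp_eq_one mm htrm (-t), hdetp,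
      det_adj2 (Fm (s + 2*l*t)) (hdetm _)]
    ring
  have ipself : ∀ X : M2, ip X X = -X.det := by
    intro X
    rw [Matrix.det_fin_two]
    simp only [ip]
    ring
  intro s t
  refine ⟨?_, ?_, ?_, ?_, ?_⟩
  · rw [show gamHat l Fp Fm mp mm s t
        = Frame l Fp (fun x => adj2 (Fm x)) mp mm (fun _ => 1) s t from
      congrFun (hgamfun t) s, hdetFrame]
    exact Matrix.det_one
  · rw [hpd1 s t, ipself, hdetFrame]
    norm_num [Matrix.det_fin_two_of]
  · rw [hpd2 s t, ipself, hdetFrame]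
    norm_num [Matrix.det_fin_two_of]
  · rw [hpd3 s t, ipself, hdetFrame, Matrix.det_fin_two_of]
    ring
  · have hT : pdTM (gamHat l Fp Fm mp mm) s t
        = Frame l Fp (fun x => adj2 (Fm x)) mp mm
          (fun x => LamL κ l 1 x + (2*l) • (KL κ 1 x - KL κ (-1) x) - LamL κ l (-1) x) s t := by
      show deriv (fun y => gamHat l Fp Fm mp mm s y) t = _
      have hfy : (fun y => gamHat l Fp Fm mp mm s y)
          = fun y => Frame l Fp (fun x => adj2 (Fm x)) mp mm (fun _ => 1) s y :=
        funext fun y => congrFun (hgamfun y) s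
      rw [hfy]
      exact (Frame_pdT hFpd hHmd hmpF hHmm2 s t).deriv
    have hsm : ∀ (r : ℝ) (M : ℝ → M2),
        r • Frame l Fp (fun x => adj2 (Fm x)) mp mm M s t
          = Frame l Fp (fun x => adj2 (Fm x)) mp mm (fun x => r • M x) s t := by
      intro r M
      simp [Frame, mul_smul_comm, smul_mul_assoc]
    have hsub : ∀ (M N : ℝ → M2),
        Frame l Fp (fun x => adj2 (Fm x)) mp mm M s t
            - Frame l Fp (fun x => adj2 (Fm x)) mp mm N s t
          = Frame l Fp (fun x => adj2 (Fm x)) mp mm (fun x => M x - N x) s t := by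
      intro M N
      simp [Frame, mul_sub, sub_mul]
    rw [hT, hpd3 s t, hpd1 s t, hsm 2 (fun x => !![0, 4*κ x; -4, 0]),
      hsm (6 * κ (s + 2*l*t)) (fun _ => !![0,2;0,0]),
      hsub (fun x => (2:ℝ) • !![0, 4*κ x; -4, 0]) (fun _ => (6 * κ (s + 2*l*t)) • !![0,2;0,0])]
    refine FrameCongr _ _ s t ?_
    ext i j
    fin_cases i <;> fin_cases j <;>
      simp [LamL, PL, KL, Matrix.smul_apply, smul_eq_mul]
    all_goals ring
end
end
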